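/- arXiv:1009.0202 — 4 statements merged into one kernel-verified Lean document; each statement's English description precedes it below -/
import Mathlib

section
/- With lines L_1: x=0, L_2: x=1, L_3: x=t, K_1: y=0, K_2: y=1, K_3: y=t in ℂ², the three points Q_{12} = (0,1), Q_{23} = (1,t), Q_{31} = (t,0) are collinear if and only if t² − t + 1 = 0. -/
theorem Matrix.det_collinearity_case6 {R : Type*} [CommRing R] (t : R) :
    Matrix.det !![0, 1, 1; 1, t, 1; t, 0, 1] = -(t ^ 2 - t + 1) := by
  rw [Matrix.det_fin_three]
  simp only [Fin.isValue, of_apply, cons_val', cons_val_zero, cons_val_fin_one, cons_val_one,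
    cons_val, zero_mul, mul_one, mul_zero, sub_self, zero_sub, one_mul, add_zero, neg_add_rev,
    neg_sub]
  ring

/-- The points `Q₁₂ = (0,1)`, `Q₂₃ = (1,t)`, `Q₃₁ = (t,0)` are collinear iff
`t² - t + 1 = 0`. -/
theorem case6_collinear_iff (t : ℂ) :
    (Matrix.det !![0, 1, 1; 1, t, 1; t, 0, 1]) = 0 ↔ t ^ 2 - t + 1 = 0 := by
  rw [Matrix.det_collinearity_case6, neg_eq_zero]
end

section
/- Fix affine lines in ℂ²: L_1: x = 0, L_3: y = 1, L_4: x + y = 1, K_1: x = 1, K_3: y = 0. Suppose γ ∈ ℂ is such that the line L_2: x = γ(y − 1) and K_2: x = γ y and K_4: x + y = γ + 1 realize the Falk–Sturmfels incidence; then the collinearity of the required triple points forces γ² − γ − 1 = 0, i.e., γ = (1 ± √5)/2. -/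
/-- In the Falk–Sturmfels configuration, the concurrency of the lines
`L₂ : x = γ(y-1)`, `K₁ : x = 1` and `K₄ : x + y = γ + 1` (required by the
incidence) forces `γ² - γ - 1 = 0`. -/
theorem falk_sturmfels_forces_golden (γ : ℂ)
    (h : ∃ x y : ℂ, x = γ * (y - 1) ∧ x = 1 ∧ x + y = γ + 1) :
    γ ^ 2 - γ - 1 = 0 := by
  obtain ⟨x, y, hL₂, hK₁, hK₄⟩ := h
  -- `K₁` and `K₄` meet at `(1, γ)`, and `L₂` passing through it reads `1 = γ (γ - 1)`.
  linear_combination (γ + 1) * hK₁ - γ * hK₄ - hL₂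
end

section
/- An arrangement of at most 6 distinct lines in P²(ℂ) is of class C_{≤2}: there exist two lines H, H' in the arrangement such that every multiple point lies on H ∪ H'. -/
/-!
Two distinct points of `ℙ²` lie on at most one common line. If `p ≠ q` are multiple points of an
arrangement of at most five lines, the pencils of lines through `p` and through `q` have at least
three lines each and share at most one, so they share exactly one and together exhaust the
arrangement. A third multiple point would meet each pencil in at most one line, hence lie on at
most two lines; so all multiple points lie on the common line. For six lines, remove a line `H`:
a multiple point off `H` is a multiple point of the remaining five lines.
-/

/-- The multiple points of a family of lines: points lying on at least three
of the lines. -/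
def multSet {P : Type*} (L : Set (Set P)) : Set P :=
  {p | 3 ≤ {l | l ∈ L ∧ p ∈ l}.ncard}

/-- A projective line in `ℙ²(ℂ)`: the zero set of a nonzero linear form. -/
def IsProjLine (l : Set (Projectivization ℂ (Fin 3 → ℂ))) : Prop :=
  ∃ f : (Fin 3 → ℂ) →ₗ[ℂ] ℂ, f ≠ 0 ∧ l = {p | f p.rep = 0}

theorem Module.Dual.ker_eq_span_of_linearIndependent {K V ι : Type*} [Field K] [AddCommGroup V]
    [Module K V] [FiniteDimensional K V] [Fintype ι] {f : Module.Dual K V} (hf : f ≠ 0)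
    {b : ι → V} (hb : LinearIndependent K b) (hcard : Fintype.card ι + 1 = Module.finrank K V)
    (hfb : ∀ i, f (b i) = 0) :
    LinearMap.ker f = Submodule.span K (Set.range b) := by
  refine (Submodule.eq_of_le_of_finrank_eq ?_ ?_).symm
  · rw [Submodule.span_le]
    rintro _ ⟨i, rfl⟩
    exact hfb i
  · have := f.finrank_ker_add_one_of_ne_zero hf
    rw [finrank_span_eq_card hb]
    omega

theorem IsProjLine.eq_of_mem_of_mem {l₁ l₂ : Set (Projectivization ℂ (Fin 3 → ℂ))}
    (h₁ : IsProjLine l₁) (h₂ : IsProjLine l₂) {p q : Projectivization ℂ (Fin 3 → ℂ)}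
    (hpq : p ≠ q) (hp₁ : p ∈ l₁) (hq₁ : q ∈ l₁) (hp₂ : p ∈ l₂) (hq₂ : q ∈ l₂) : l₁ = l₂ := by
  obtain ⟨f, hf, rfl⟩ := h₁
  obtain ⟨g, hg, rfl⟩ := h₂
  have hpair := Projectivization.linearIndependent_pair_iff_ne.2 hpq
  have hdim : Fintype.card (Fin 2) + 1 = Module.finrank ℂ (Fin 3 → ℂ) := by simp
  have hker : LinearMap.ker f = LinearMap.ker g := by
    rw [Module.Dual.ker_eq_span_of_linearIndependent hf hpair hdim (Fin.forall_fin_two.2 ⟨hp₁, hq₁⟩),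
      Module.Dual.ker_eq_span_of_linearIndependent hg hpair hdim (Fin.forall_fin_two.2 ⟨hp₂, hq₂⟩)]
  ext x
  simp only [Set.mem_ofPred_eq, ← LinearMap.mem_ker, hker]

section Incidence

variable {P : Type*}

def linesThrough (L : Set (Set P)) (p : P) : Set (Set P) :=
  {l | l ∈ L ∧ p ∈ l}

theorem mem_multSet {L : Set (Set P)} {p : P} : p ∈ multSet L ↔ 3 ≤ (linesThrough L p).ncard :=
  Iff.rfl

theorem linesThrough_subset (L : Set (Set P)) (p : P) : linesThrough L p ⊆ L :=
  fun _ hl => hl.1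

def IsPartialLinearSpace (L : Set (Set P)) : Prop :=
  ∀ ⦃p q : P⦄, p ≠ q → (linesThrough L p ∩ linesThrough L q).Subsingleton

theorem isPartialLinearSpace_of_isProjLine {A : Set (Set (Projectivization ℂ (Fin 3 → ℂ)))}
    (hline : ∀ l ∈ A, IsProjLine l) : IsPartialLinearSpace A :=
  fun _ _ hpq _ ⟨⟨hl₁, hp₁⟩, _, hq₁⟩ _ ⟨⟨hl₂, hp₂⟩, _, hq₂⟩ =>
    (hline _ hl₁).eq_of_mem_of_mem (hline _ hl₂) hpq hp₁ hq₁ hp₂ hq₂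

variable {L : Set (Set P)}

theorem IsPartialLinearSpace.ncard_inter_le_one (hL : IsPartialLinearSpace L) (hfin : L.Finite)
    {p q : P} (hpq : p ≠ q) : (linesThrough L p ∩ linesThrough L q).ncard ≤ 1 :=
  (Set.ncard_le_one ((hfin.subset (linesThrough_subset L p)).inter_of_left _)).2
    fun _ ha _ hb => hL hpq ha hb

theorem IsPartialLinearSpace.linesThrough_union_eq_and_inter_nonempty (hL : IsPartialLinearSpace L)
    (hfin : L.Finite) (h5 : L.ncard ≤ 5) {p q : P} (hp : p ∈ multSet L) (hq : q ∈ multSet L)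
    (hpq : p ≠ q) :
    linesThrough L p ∪ linesThrough L q = L ∧ (linesThrough L p ∩ linesThrough L q).Nonempty := by
  have hunion_sub := Set.union_subset (linesThrough_subset L p) (linesThrough_subset L q)
  have hsum := Set.ncard_union_add_ncard_inter (linesThrough L p) (linesThrough L q)
    (hfin.subset (linesThrough_subset L p)) (hfin.subset (linesThrough_subset L q))
  have hinter := hL.ncard_inter_le_one hfin hpq
  have hunion := Set.ncard_le_ncard hunion_sub hfin
  rw [mem_multSet] at hp hq
  exact ⟨Set.eq_of_subset_of_ncard_le hunion_sub (by omega) hfin,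
    Set.nonempty_of_ncard_ne_zero (by omega)⟩

theorem IsPartialLinearSpace.eq_or_eq_of_mem_multSet (hL : IsPartialLinearSpace L)
    (hfin : L.Finite) (h5 : L.ncard ≤ 5) {p q r : P} (hp : p ∈ multSet L) (hq : q ∈ multSet L)
    (hpq : p ≠ q) (hr : r ∈ multSet L) : r = p ∨ r = q := by
  by_contra! hne
  have hcover : linesThrough L r =
      (linesThrough L r ∩ linesThrough L p) ∪ (linesThrough L r ∩ linesThrough L q) := by
    rw [← Set.inter_union_distrib_left,
      (hL.linesThrough_union_eq_and_inter_nonempty hfin h5 hp hq hpq).1,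
      Set.inter_eq_left.2 (linesThrough_subset L r)]
  have hle := Set.ncard_union_le (linesThrough L r ∩ linesThrough L p)
    (linesThrough L r ∩ linesThrough L q)
  rw [← hcover] at hle
  have := hL.ncard_inter_le_one hfin hne.1
  have := hL.ncard_inter_le_one hfin hne.2
  rw [mem_multSet] at hr
  omega

theorem IsPartialLinearSpace.exists_multSet_subset_of_ncard_le_five (hL : IsPartialLinearSpace L)
    (hfin : L.Finite) (h5 : L.ncard ≤ 5) (hne : L.Nonempty) : ∃ H ∈ L, multSet L ⊆ H := by
  rcases (multSet L).subsingleton_or_nontrivial with hsub | ⟨p, hp, q, hq, hpq⟩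
  · rcases hsub.eq_empty_or_singleton with hempty | ⟨p, hsingle⟩
    · obtain ⟨H, hH⟩ := hne
      exact ⟨H, hH, hempty ▸ Set.empty_subset H⟩
    · have hp : p ∈ multSet L := hsingle ▸ rfl
      obtain ⟨H, hH, hpH⟩ := Set.nonempty_of_ncard_ne_zero (s := linesThrough L p)
        (by rw [mem_multSet] at hp; omega)
      exact ⟨H, hH, hsingle ▸ Set.singleton_subset_iff.2 hpH⟩
  · obtain ⟨H, ⟨hH, hpH⟩, -, hqH⟩ :=
      (hL.linesThrough_union_eq_and_inter_nonempty hfin h5 hp hq hpq).2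
    refine ⟨H, hH, fun r hr => ?_⟩
    rcases hL.eq_or_eq_of_mem_multSet hfin h5 hp hq hpq hr with rfl | rfl
    exacts [hpH, hqH]

theorem multSet_subset_union_multSet_sdiff_singleton (L : Set (Set P)) (H : Set P) :
    multSet L ⊆ H ∪ multSet (L \ {H}) := by
  intro p hp
  by_cases hpH : p ∈ H
  · exact Or.inl hpH
  · have hlines : linesThrough (L \ {H}) p = linesThrough L p := by
      ext l
      refine ⟨fun ⟨⟨hl, _⟩, hpl⟩ => ⟨hl, hpl⟩, fun ⟨hl, hpl⟩ => ⟨⟨hl, ?_⟩, hpl⟩⟩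
      rintro rfl
      exact hpH hpl
    exact Or.inr (mem_multSet.2 (hlines ▸ hp))

@[simp]
theorem multSet_empty : multSet (∅ : Set (Set P)) = ∅ := by
  ext p
  simp [mem_multSet, linesThrough]

end Incidence

/-- An arrangement of at most 6 distinct lines in `ℙ²(ℂ)` is of class
`C_{≤2}`: all its multiple points lie on the union of two of its lines. -/
theorem le_six_lines_class_C2
    (A : Set (Set (Projectivization ℂ (Fin 3 → ℂ))))
    (hA : A.Finite) (hcard : A.ncard ≤ 6) (hline : ∀ l ∈ A, IsProjLine l)
    (hne : A.Nonempty) :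
    ∃ H ∈ A, ∃ H' ∈ A, multSet A ⊆ H ∪ H' := by
  obtain ⟨H, hH⟩ := hne
  have hsplit := multSet_subset_union_multSet_sdiff_singleton A H
  rcases (A \ {H}).eq_empty_or_nonempty with hrest | hrest
  · rw [hrest, multSet_empty, Set.union_empty] at hsplit
    exact ⟨H, hH, H, hH, hsplit.trans Set.subset_union_left⟩
  · have h5 : (A \ {H}).ncard ≤ 5 := by
      have := Set.ncard_sdiff_singleton_of_mem hH
      omega
    have hrest_lin : IsPartialLinearSpace (A \ {H}) :=
      isPartialLinearSpace_of_isProjLine fun l hl => hline l hl.1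
    obtain ⟨H', hH', hcover⟩ := hrest_lin.exists_multSet_subset_of_ncard_le_five hA.sdiff h5 hrest
    exact ⟨H, hH, H', hH'.1, hsplit.trans (Set.union_subset_union_right H hcover)⟩
end

section
/- There exists an element g ∈ PGL_3(ℂ) with real entries mapping the 9 lines of FS^+ (with γ_+ = (1+√5)/2) bijectively onto the 9 lines of FS^− (with γ_− = (1−√5)/2) via the correspondence L_1 ↦ L_3, L_2 ↦ L_4, L_3 ↦ L_2, L_4 ↦ L_1, K_1 ↦ K_3, K_2 ↦ K_4, K_3 ↦ K_2, K_4 ↦ K_1, H_9 ↦ H_9. -/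
/-- The coefficient vectors of the nine lines of the Falk–Sturmfels
arrangement `FS^γ`, in the order `L₁, L₂, L₃, L₄, K₁, K₂, K₃, K₄, H₉`. -/
def FSline (γ : ℂ) : Fin 9 → Fin 3 → ℂ :=
  ![![1, 0, 0],            -- L₁ : x = 0
    ![1, -γ, γ],           -- L₂ : x = γ(y - z)
    ![0, 1, -1],           -- L₃ : y = z
    ![1, 1, -1],           -- L₄ : x + y = z
    ![1, 0, -1],           -- K₁ : x = z
    ![1, -γ, 0],           -- K₂ : x = γy
    ![0, 1, 0],            -- K₃ : y = 0
    ![1, 1, -(γ + 1)],     -- K₄ : x + y = (γ+1)z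
    ![0, 0, 1]]            -- H₉ : z = 0

/-- The correspondence `L₁↦L₃, L₂↦L₄, L₃↦L₂, L₄↦L₁, K₁↦K₃, K₂↦K₄, K₃↦K₂,
K₄↦K₁, H₉↦H₉`. -/
def FSperm : Fin 9 → Fin 9 := ![2, 3, 1, 0, 6, 7, 5, 4, 8]

/-- There is an element of `PGL₃(ℂ)` with real entries mapping the nine lines
of `FS⁺` (γ = (1+√5)/2) bijectively onto those of `FS⁻` (γ = (1-√5)/2) via the
correspondence `FSperm`: on coefficient vectors (dual action), the pullback of
the coefficient vector of a line of `FS⁺` is proportional to that of the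
corresponding line of `FS⁻`. -/
theorem fs_plus_minus_projectively_equivalent :
    ∃ g : Matrix (Fin 3) (Fin 3) ℝ, g.det ≠ 0 ∧
      ∀ i : Fin 9, ∃ c : ℂ, c ≠ 0 ∧
        Matrix.vecMul (FSline (((1 + Real.sqrt 5) / 2 : ℝ) : ℂ) i)
            (g.map (fun x : ℝ => (x : ℂ)))
          = c • FSline (((1 - Real.sqrt 5) / 2 : ℝ) : ℂ) (FSperm i) := by
  have hs5 : Real.sqrt 5 * Real.sqrt 5 = 5 := Real.mul_self_sqrt (by norm_num)
  have hpos : (0:ℝ) < (1 + Real.sqrt 5) / 2 := by positivity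
  have hφ0 : (((1 + Real.sqrt 5) / 2 : ℝ) : ℂ) ≠ 0 := by exact_mod_cast hpos.ne'
  have hφ1 : (((1 + Real.sqrt 5) / 2 : ℝ) : ℂ) + 1 ≠ 0 := by
    have h : (0:ℝ) < (1 + Real.sqrt 5) / 2 + 1 := by linarith
    exact_mod_cast h.ne'
  have hC2 : ((Real.sqrt 5 : ℝ) : ℂ) ^ 2 = 5 := by
    rw [sq]; exact_mod_cast congrArg (fun x : ℝ => (x : ℂ)) hs5
  refine ⟨!![0, -1, 1; (1 + Real.sqrt 5) / 2, 1, 0; 0, 0, 1], ?_, ?_⟩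
  · simp [Matrix.det_fin_three]
    positivity
  intro i
  fin_cases i
  · refine ⟨(-1 : ℂ), by norm_num, ?_⟩
    show Matrix.vecMul (![1, 0, 0] : Fin 3 → ℂ)
        ((!![0, -1, 1; (1 + Real.sqrt 5) / 2, 1, 0; 0, 0, 1] : Matrix (Fin 3) (Fin 3) ℝ).map
          (fun x : ℝ => (x : ℂ)))
      = (-1 : ℂ) • (![0, 1, -1] : Fin 3 → ℂ)
    funext j
    fin_cases j <;> (try simp [Matrix.vecMul, dotProduct, Fin.sum_univ_three]) <;>
      (try push_cast) <;> (try ring_nf) <;> (try rw [hC2]) <;> (try norm_num) <;> (try ring)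
  · refine ⟨(-((((1 + Real.sqrt 5) / 2 : ℝ) : ℂ) + 1)), neg_ne_zero.mpr hφ1, ?_⟩
    show Matrix.vecMul (![1, -(((1 + Real.sqrt 5) / 2 : ℝ) : ℂ), (((1 + Real.sqrt 5) / 2 : ℝ) : ℂ)] : Fin 3 → ℂ)
        ((!![0, -1, 1; (1 + Real.sqrt 5) / 2, 1, 0; 0, 0, 1] : Matrix (Fin 3) (Fin 3) ℝ).map
          (fun x : ℝ => (x : ℂ)))
      = (-((((1 + Real.sqrt 5) / 2 : ℝ) : ℂ) + 1)) • (![1, 1, -1] : Fin 3 → ℂ)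
    funext j
    fin_cases j <;> (try simp [Matrix.vecMul, dotProduct, Fin.sum_univ_three]) <;>
      (try push_cast) <;> (try ring_nf) <;> (try rw [hC2]) <;> (try norm_num) <;> (try ring)
  · refine ⟨(((1 + Real.sqrt 5) / 2 : ℝ) : ℂ), hφ0, ?_⟩
    show Matrix.vecMul (![0, 1, -1] : Fin 3 → ℂ)
        ((!![0, -1, 1; (1 + Real.sqrt 5) / 2, 1, 0; 0, 0, 1] : Matrix (Fin 3) (Fin 3) ℝ).map
          (fun x : ℝ => (x : ℂ)))
      = (((1 + Real.sqrt 5) / 2 : ℝ) : ℂ) • (![1, -(((1 - Real.sqrt 5) / 2 : ℝ) : ℂ), (((1 - Real.sqrt 5) / 2 : ℝ) : ℂ)] : Fin 3 → ℂ)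
    funext j
    fin_cases j <;> (try simp [Matrix.vecMul, dotProduct, Fin.sum_univ_three]) <;>
      (try push_cast) <;> (try ring_nf) <;> (try rw [hC2]) <;> (try norm_num) <;> (try ring)
  · refine ⟨(((1 + Real.sqrt 5) / 2 : ℝ) : ℂ), hφ0, ?_⟩
    show Matrix.vecMul (![1, 1, -1] : Fin 3 → ℂ)
        ((!![0, -1, 1; (1 + Real.sqrt 5) / 2, 1, 0; 0, 0, 1] : Matrix (Fin 3) (Fin 3) ℝ).map
          (fun x : ℝ => (x : ℂ)))
      = (((1 + Real.sqrt 5) / 2 : ℝ) : ℂ) • (![1, 0, 0] : Fin 3 → ℂ)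
    funext j
    fin_cases j <;> (try simp [Matrix.vecMul, dotProduct, Fin.sum_univ_three]) <;>
      (try push_cast) <;> (try ring_nf) <;> (try rw [hC2]) <;> (try norm_num) <;> (try ring)
  · refine ⟨(-1 : ℂ), by norm_num, ?_⟩
    show Matrix.vecMul (![1, 0, -1] : Fin 3 → ℂ)
        ((!![0, -1, 1; (1 + Real.sqrt 5) / 2, 1, 0; 0, 0, 1] : Matrix (Fin 3) (Fin 3) ℝ).map
          (fun x : ℝ => (x : ℂ)))
      = (-1 : ℂ) • (![0, 1, 0] : Fin 3 → ℂ)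
    funext j
    fin_cases j <;> (try simp [Matrix.vecMul, dotProduct, Fin.sum_univ_three]) <;>
      (try push_cast) <;> (try ring_nf) <;> (try rw [hC2]) <;> (try norm_num) <;> (try ring)
  · refine ⟨(-((((1 + Real.sqrt 5) / 2 : ℝ) : ℂ) + 1)), neg_ne_zero.mpr hφ1, ?_⟩
    show Matrix.vecMul (![1, -(((1 + Real.sqrt 5) / 2 : ℝ) : ℂ), 0] : Fin 3 → ℂ)
        ((!![0, -1, 1; (1 + Real.sqrt 5) / 2, 1, 0; 0, 0, 1] : Matrix (Fin 3) (Fin 3) ℝ).map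
          (fun x : ℝ => (x : ℂ)))
      = (-((((1 + Real.sqrt 5) / 2 : ℝ) : ℂ) + 1)) • (![1, 1, -((((1 - Real.sqrt 5) / 2 : ℝ) : ℂ) + 1)] : Fin 3 → ℂ)
    funext j
    fin_cases j <;> (try simp [Matrix.vecMul, dotProduct, Fin.sum_univ_three]) <;>
      (try push_cast) <;> (try ring_nf) <;> (try rw [hC2]) <;> (try norm_num) <;> (try ring)
  · refine ⟨(((1 + Real.sqrt 5) / 2 : ℝ) : ℂ), hφ0, ?_⟩
    show Matrix.vecMul (![0, 1, 0] : Fin 3 → ℂ)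
        ((!![0, -1, 1; (1 + Real.sqrt 5) / 2, 1, 0; 0, 0, 1] : Matrix (Fin 3) (Fin 3) ℝ).map
          (fun x : ℝ => (x : ℂ)))
      = (((1 + Real.sqrt 5) / 2 : ℝ) : ℂ) • (![1, -(((1 - Real.sqrt 5) / 2 : ℝ) : ℂ), 0] : Fin 3 → ℂ)
    funext j
    fin_cases j <;> (try simp [Matrix.vecMul, dotProduct, Fin.sum_univ_three]) <;>
      (try push_cast) <;> (try ring_nf) <;> (try rw [hC2]) <;> (try norm_num) <;> (try ring)
  · refine ⟨(((1 + Real.sqrt 5) / 2 : ℝ) : ℂ), hφ0, ?_⟩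
    show Matrix.vecMul (![1, 1, -((((1 + Real.sqrt 5) / 2 : ℝ) : ℂ) + 1)] : Fin 3 → ℂ)
        ((!![0, -1, 1; (1 + Real.sqrt 5) / 2, 1, 0; 0, 0, 1] : Matrix (Fin 3) (Fin 3) ℝ).map
          (fun x : ℝ => (x : ℂ)))
      = (((1 + Real.sqrt 5) / 2 : ℝ) : ℂ) • (![1, 0, -1] : Fin 3 → ℂ)
    funext j
    fin_cases j <;> (try simp [Matrix.vecMul, dotProduct, Fin.sum_univ_three]) <;>
      (try push_cast) <;> (try ring_nf) <;> (try rw [hC2]) <;> (try norm_num) <;> (try ring)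
  · refine ⟨(1 : ℂ), one_ne_zero, ?_⟩
    show Matrix.vecMul (![0, 0, 1] : Fin 3 → ℂ)
        ((!![0, -1, 1; (1 + Real.sqrt 5) / 2, 1, 0; 0, 0, 1] : Matrix (Fin 3) (Fin 3) ℝ).map
          (fun x : ℝ => (x : ℂ)))
      = (1 : ℂ) • (![0, 0, 1] : Fin 3 → ℂ)
    funext j
    fin_cases j <;> (try simp [Matrix.vecMul, dotProduct, Fin.sum_univ_three]) <;>
      (try push_cast) <;> (try ring_nf) <;> (try rw [hC2]) <;> (try norm_num) <;> (try ring)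
end
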